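/- Let m ≥ 3 be odd and q = 2. The code C = W([m/2],2) in H(m,2) has covering radius ρ = (m−1)/2, its cell C_ρ at maximal distance equals the repetition code Rep(m,2) = {(0,…,0),(1,…,1)}, and both C and C_ρ are completely transitive. -/

import Mathlib

open Equiv Pointwise

section HammingDefs

variable {I : Type*} [Fintype I] [DecidableEq I] {q : ℕ}

/-- The permutation of the vertex set of the Hamming graph `H(I,q)` induced by the
letter permutations `g i` (acting coordinatewise) followed by the coordinate
permutation `σ`:  `(α^x)_i = g_{σ⁻¹ i} (α_{σ⁻¹ i})`. -/
def tvp (g : I → Equiv.Perm (Fin q)) (σ : Equiv.Perm I) : Equiv.Perm (I → Fin q) where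
  toFun α i := g (σ⁻¹ i) (α (σ⁻¹ i))
  invFun β i := (g i)⁻¹ (β (σ i))
  left_inv α := by funext i; simp
  right_inv β := by funext i; simp

/-- The automorphism group of the Hamming graph `H(I,q)`: all permutations of the
vertex set preserving adjacency (Hamming distance 1). -/
def autH (I : Type*) [Fintype I] [DecidableEq I] (q : ℕ) :
    Subgroup (Equiv.Perm (I → Fin q)) where
  carrier := {y | ∀ α β : I → Fin q, hammingDist (y α) (y β) = 1 ↔ hammingDist α β = 1}
  one_mem' := by intro α β; simp
  mul_mem' := by
    intro a b ha hb α β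
    rw [Equiv.Perm.mul_apply, Equiv.Perm.mul_apply, ha, hb]
  inv_mem' := by
    intro a ha α β
    simpa using (ha (a⁻¹ α) (a⁻¹ β)).symm

/-- The homomorphism `S_q × S_I → Sym(V(H(I,q)))` whose image is `Diag(S_q) ⋊ L`. -/
def diagLHom (I : Type*) [Fintype I] [DecidableEq I] (q : ℕ) :
    Equiv.Perm (Fin q) × Equiv.Perm I →* Equiv.Perm (I → Fin q) where
  toFun x := tvp (fun _ => x.1) x.2
  map_one' := by
    ext α i
    simp [tvp]
  map_mul' x y := by
    ext α i
    simp [tvp, mul_inv_rev]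

/-- The subgroup `Diag_I(S_q) ⋊ L` of the automorphism group of `H(I,q)`. -/
def diagL (I : Type*) [Fintype I] [DecidableEq I] (q : ℕ) :
    Subgroup (Equiv.Perm (I → Fin q)) :=
  (diagLHom I q).range

/-- The subgroup `L` of pure coordinate permutations of `H(I,q)`. -/
def permL (I : Type*) [Fintype I] [DecidableEq I] (q : ℕ) :
    Subgroup (Equiv.Perm (I → Fin q)) :=
  ((diagLHom I q).comp (MonoidHom.inr (Equiv.Perm (Fin q)) (Equiv.Perm I))).range

/-- Distance from a vertex to a code. -/
noncomputable def distC (γ : I → Fin q) (C : Set (I → Fin q)) : ℕ :=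
  sInf {d | ∃ β ∈ C, hammingDist γ β = d}

/-- The cell `C_i` of the distance partition of the code `C`. -/
def cell (C : Set (I → Fin q)) (i : ℕ) : Set (I → Fin q) :=
  {γ | distC γ C = i}

/-- The covering radius of the code `C`. -/
noncomputable def covRad (C : Set (I → Fin q)) : ℕ :=
  sSup {d | ∃ γ : I → Fin q, distC γ C = d}

/-- The minimum distance of the code `C`. -/
noncomputable def minDist (C : Set (I → Fin q)) : ℕ :=
  sInf {d | ∃ β ∈ C, ∃ γ ∈ C, β ≠ γ ∧ hammingDist β γ = d}

/-- `S` is an orbit of the subgroup `X` of permutations of the vertex set. -/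
def IsOrbitOf (X : Subgroup (Equiv.Perm (I → Fin q))) (S : Set (I → Fin q)) : Prop :=
  ∃ v, S = {w | ∃ x ∈ X, x v = w}

/-- `C` is `X`-neighbour transitive: `X` is a group of automorphisms of the Hamming
graph, and both `C` and its set of neighbours `C_1` are `X`-orbits. -/
def NbrTransitive (X : Subgroup (Equiv.Perm (I → Fin q))) (C : Set (I → Fin q)) : Prop :=
  X ≤ autH I q ∧ IsOrbitOf X C ∧ IsOrbitOf X (cell C 1)

/-- `C` is `X`-completely transitive: every cell of the distance partition is an `X`-orbit. -/
def ComplTransitive (X : Subgroup (Equiv.Perm (I → Fin q))) (C : Set (I → Fin q)) : Prop :=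
  X ≤ autH I q ∧ ∀ i ≤ covRad C, IsOrbitOf X (cell C i)

/-- `C` is diagonally `X`-neighbour transitive. -/
def DiagNbrTransitive (X : Subgroup (Equiv.Perm (I → Fin q))) (C : Set (I → Fin q)) : Prop :=
  NbrTransitive X C ∧ X ≤ diagL I q

/-- The automorphism group of the code `C`: the setwise stabiliser of `C` in the
automorphism group of the Hamming graph. -/
def autCode (C : Set (I → Fin q)) : Subgroup (Equiv.Perm (I → Fin q)) :=
  autH I q ⊓ MulAction.stabilizer (Equiv.Perm (I → Fin q)) C

/-- Number of occurrences of the letter `a` in the vertex `α`. -/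
def cnt (α : I → Fin q) (a : Fin q) : ℕ :=
  (Finset.univ.filter fun i => α i = a).card

/-- The composition `Q(α)` of a vertex: the set of pairs `(a, p)` such that the letter `a`
occurs exactly `p > 0` times in `α`. -/
def compOf (α : I → Fin q) : Set (Fin q × ℕ) :=
  {x | 0 < x.2 ∧ cnt α x.1 = x.2}

/-- `Num(α)`: the set of pairs `(p, s)` such that exactly `s > 0` distinct letters occur
exactly `p > 0` times in `α`. -/
def numOf (α : I → Fin q) : Set (ℕ × ℕ) :=
  {x | 0 < x.1 ∧ 0 < x.2 ∧ (Finset.univ.filter fun a => cnt α a = x.1).card = x.2}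

/-- The repetition code `Rep(I,q)`. -/
def repCode (I : Type*) [Fintype I] [DecidableEq I] (q : ℕ) : Set (I → Fin q) :=
  {α | ∃ a, α = fun _ => a}

/-- The injection code `Inj(I,q)`: all tuples with pairwise distinct entries. -/
def injCode (I : Type*) [Fintype I] [DecidableEq I] (q : ℕ) : Set (I → Fin q) :=
  {α | Function.Injective α}

/-- The code `All(pq,q)`: all vertices in which every letter occurs exactly `p` times. -/
def allCode (I : Type*) [Fintype I] [DecidableEq I] (q p : ℕ) : Set (I → Fin q) :=
  {α | ∀ a, cnt α a = p}

/-- `C` is `s`-regular. -/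
def RegularUpTo (C : Set (I → Fin q)) (s : ℕ) : Prop :=
  ∀ i ≤ s, ∀ γ ∈ cell C i, ∀ γ' ∈ cell C i, ∀ k : ℕ,
    {β ∈ C | hammingDist γ β = k}.ncard = {β ∈ C | hammingDist γ' β = k}.ncard

/-- `C` is completely regular. -/
def ComplRegular (C : Set (I → Fin q)) : Prop :=
  RegularUpTo C (covRad C)

/-- `C` is a constant composition code: every letter occurs the same positive number of
times in every codeword. -/
def IsCCC (C : Set (I → Fin q)) : Prop :=
  C.Nonempty ∧ ∃ f : Fin q → ℕ, (∀ a, 0 < f a) ∧ ∀ β ∈ C, ∀ a, cnt β a = f a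

end HammingDefs

section Weight

/-- The weight of a binary vertex: number of nonzero entries. -/
def wt {m : ℕ} (α : Fin m → Fin 2) : ℕ :=
  (Finset.univ.filter fun i => α i ≠ 0).card

/-- The code `W([m/2],2)`: binary `m`-tuples of weight `(m+1)/2` or `(m-1)/2`. -/
def wCode (m : ℕ) : Set (Fin m → Fin 2) :=
  {α | wt α = (m+1)/2 ∨ wt α = (m-1)/2}

/-- The code `W([m/2],2)` over a general alphabet (used when `q = 2`): vertices in which
one letter occurs `(m+1)/2` times and another `(m-1)/2` times. -/
def wCodeGen (m q : ℕ) : Set (Fin m → Fin q) :=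
  {α | ∃ a b : Fin q, a ≠ b ∧ cnt α a = (m+1)/2 ∧ cnt α b = (m-1)/2}

end Weight

section PermCodes

/-- The vertex `α(g) = (1^g, …, q^g)` of `H(q,q)` associated with a permutation `g`. -/
def alphaVtx {q : ℕ} (g : Equiv.Perm (Fin q)) : Fin q → Fin q := fun i => g i

/-- The permutation code generated by a set `T` of permutations. -/
def permCode {q : ℕ} (T : Set (Equiv.Perm (Fin q))) : Set (Fin q → Fin q) :=
  alphaVtx '' T

end PermCodes

section Repetition

variable {I : Type*} [Fintype I] [DecidableEq I] {q : ℕ}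

/-- The `p`-fold repetition `rep_p(α) = (α,…,α)`, a vertex of `H(p·|I|, q)`. -/
def repv (p : ℕ) (α : I → Fin q) : Fin p × I → Fin q := fun ji => α ji.2

/-- The `p`-fold repetition code `Rep_p(C)`. -/
def repCodeP (p : ℕ) (C : Set (I → Fin q)) : Set (Fin p × I → Fin q) :=
  repv p '' C

/-- The homomorphism `Sym(V(H(I,q))) × S_p → Sym(V(H(p·|I|,q)))`: the pair `(x,σ)` acts on
`p`-tuples of vertices by `(α_1,…,α_p) ↦ (α_{σ⁻¹(1)}^x, …, α_{σ⁻¹(p)}^x)`. -/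
def repHom (p : ℕ) (I : Type*) [Fintype I] [DecidableEq I] (q : ℕ) :
    Equiv.Perm (I → Fin q) × Equiv.Perm (Fin p) →* Equiv.Perm (Fin p × I → Fin q) where
  toFun x :=
    { toFun := fun β ji => x.1 (fun i => β (x.2⁻¹ ji.1, i)) ji.2
      invFun := fun β ji => x.1⁻¹ (fun i => β (x.2 ji.1, i)) ji.2
      left_inv := by intro β; funext ji; simp
      right_inv := by intro β; funext ji; simp }
  map_one' := by ext β ji; simp
  map_mul' x y := by ext β ji; simp [mul_inv_rev]

end Repetition

/-!
Write `m = 2k + 1`. Both `W([m/2],2)` (weights `k`, `k + 1`) and `Rep(m,2)` (weights `0`, `m`)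
are unions of weight shells. For binary words `|wt α - wt β| ≤ d(α, β)`, and for every weight
`t ≤ m` equality is attained by some `β` of weight `t` whose support is nested with that of `α`.
So the distance from `γ` to such a code is the distance from `wt γ` to the allowed weights, and
every cell of either code is a set `{γ | wt γ = a ∨ wt γ = m - a}`. These sets are exactly the
orbits of `Diag(S_2) ⋊ L`: coordinate permutations are transitive on each weight shell and the
diagonal swap `0 ↔ 1` exchanges the weights `a` and `m - a`.
-/

open Finset
open scoped symmDiff

section CodesInHammingGraphs

variable {I : Type*} {q : ℕ}

theorem tvp_apply (g : I → Perm (Fin q)) (σ : Perm I) (α : I → Fin q) (i : I) :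
    tvp g σ α i = g (σ⁻¹ i) (α (σ⁻¹ i)) := rfl

variable [Fintype I]

theorem distC_eq_of_forall_le {C : Set (I → Fin q)} {γ : I → Fin q} {d : ℕ}
    (hle : ∀ β ∈ C, d ≤ hammingDist γ β) (hex : ∃ β ∈ C, hammingDist γ β = d) :
    distC γ C = d :=
  le_antisymm (Nat.sInf_le hex) (le_csInf ⟨d, hex⟩ fun _ ⟨β, hβ, h⟩ => h ▸ hle β hβ)

theorem covRad_eq_of_forall_le {C : Set (I → Fin q)} {r : ℕ}
    (hle : ∀ γ, distC γ C ≤ r) (hex : ∃ γ, distC γ C = r) : covRad C = r :=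
  le_antisymm (csSup_le ⟨r, hex⟩ fun _ ⟨γ, h⟩ => h ▸ hle γ)
    (le_csSup ⟨r, fun _ ⟨γ, h⟩ => h ▸ hle γ⟩ hex)

theorem hammingDist_tvp (g : I → Perm (Fin q)) (σ : Perm I) (α β : I → Fin q) :
    hammingDist (tvp g σ α) (tvp g σ β) = hammingDist α β := by
  simp only [hammingDist, tvp_apply, (g _).injective.ne_iff]
  exact card_equiv σ⁻¹ (by simp)

theorem exists_perm_apply_eq_of_cnt_eq {α β : I → Fin q} (h : ∀ a, cnt α a = cnt β a) :
    ∃ σ : Perm I, ∀ i, α (σ i) = β i := by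
  have e : ∀ a, {i // β i = a} ≃ {i // α i = a} := fun a =>
    Fintype.equivOfCardEq (by simp only [Fintype.card_subtype]; exact (h a).symm)
  exact ⟨ofFiberEquiv e, ofFiberEquiv_map e⟩

variable [DecidableEq I]

theorem tvp_mem_autH (g : I → Perm (Fin q)) (σ : Perm I) : tvp g σ ∈ autH I q :=
  fun α β => by rw [hammingDist_tvp]

theorem diagL_le_autH : diagL I q ≤ autH I q := by
  rintro _ ⟨⟨g, σ⟩, rfl⟩
  exact tvp_mem_autH (fun _ => g) σ

theorem diagLHom_apply_apply (g : Perm (Fin q)) (σ : Perm I) (α : I → Fin q) (i : I) :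
    diagLHom I q (g, σ) α i = g (α (σ⁻¹ i)) := rfl

theorem cnt_diagLHom_apply (g : Perm (Fin q)) (σ : Perm I) (α : I → Fin q) (a : Fin q) :
    cnt (diagLHom I q (g, σ) α) (g a) = cnt α a := by
  simp only [cnt, diagLHom_apply_apply, g.injective.eq_iff]
  exact card_equiv σ⁻¹ (by simp)

theorem exists_mem_diagL_apply_eq_iff (α β : I → Fin q) :
    (∃ x ∈ diagL I q, x α = β) ↔ ∃ g : Perm (Fin q), ∀ a, cnt β (g a) = cnt α a := by
  constructor
  · rintro ⟨_, ⟨⟨g, σ⟩, rfl⟩, rfl⟩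
    exact ⟨g, cnt_diagLHom_apply g σ α⟩
  · rintro ⟨g, h⟩
    have hcnt : ∀ b, cnt (diagLHom I q (g, 1) α) b = cnt β b := fun b => by
      rw [← g.apply_symm_apply b, cnt_diagLHom_apply, h]
    obtain ⟨σ, hσ⟩ := exists_perm_apply_eq_of_cnt_eq hcnt
    exact ⟨_, ⟨(g, σ⁻¹), rfl⟩, funext hσ⟩

end CodesInHammingGraphs

section BinaryWeight

variable {m : ℕ}

theorem fin_two_ne_zero_iff_eq_one : ∀ a : Fin 2, a ≠ 0 ↔ a = 1 := by decide

theorem wt_eq_cnt_one (α : Fin m → Fin 2) : wt α = cnt α 1 := by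
  simp only [wt, cnt, fin_two_ne_zero_iff_eq_one]

theorem cnt_zero_add_wt (α : Fin m → Fin 2) : cnt α 0 + wt α = m := by
  simpa [cnt, wt] using card_filter_add_card_filter_not (s := univ) (p := fun i => α i = 0)

theorem wt_le (α : Fin m → Fin 2) : wt α ≤ m := by
  have := cnt_zero_add_wt α
  omega

theorem wt_eq_zero_iff (α : Fin m → Fin 2) : wt α = 0 ↔ α = fun _ => 0 := by
  simp [wt, funext_iff]

theorem wt_eq_card_iff (α : Fin m → Fin 2) : wt α = m ↔ α = fun _ => 1 := by
  have := cnt_zero_add_wt α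
  rw [show wt α = m ↔ cnt α 0 = 0 by omega]
  simp [cnt, funext_iff, ← fin_two_ne_zero_iff_eq_one]

theorem wt_eq_hammingDist_zero (α : Fin m → Fin 2) : wt α = hammingDist α 0 :=
  (hammingDist_zero_right α).symm

theorem dist_wt_le_hammingDist (α β : Fin m → Fin 2) :
    Nat.dist (wt α) (wt β) ≤ hammingDist α β := by
  have h₁ := hammingDist_triangle α β 0
  have h₂ := hammingDist_triangle β α 0
  rw [← wt_eq_hammingDist_zero, ← wt_eq_hammingDist_zero, hammingDist_comm β α] at *
  unfold Nat.dist
  omega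

theorem hammingDist_eq_card_symmDiff (α β : Fin m → Fin 2) :
    hammingDist α β =
      #(({i | α i ≠ 0} : Finset (Fin m)) ∆ ({i | β i ≠ 0} : Finset (Fin m))) := by
  unfold hammingDist
  congr 1
  ext i
  simp only [mem_filter, mem_univ, true_and, mem_symmDiff]
  generalize α i = a
  generalize β i = b
  revert a b
  decide

theorem wt_ite_mem (s : Finset (Fin m)) :
    wt (fun i => if i ∈ s then (1 : Fin 2) else 0) = #s := by
  simp [wt]

theorem exists_wt_eq_hammingDist_eq (γ : Fin m → Fin 2) {t : ℕ} (ht : t ≤ m) :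
    ∃ β, wt β = t ∧ hammingDist γ β = Nat.dist (wt γ) t := by
  set s : Finset (Fin m) := {i | γ i ≠ 0}
  obtain ⟨u, hsu, hu⟩ : ∃ u : Finset (Fin m), (u ⊆ s ∨ s ⊆ u) ∧ #u = t := by
    rcases le_total t #s with h | h
    · obtain ⟨u, -, hus, hu⟩ := exists_subsuperset_card_eq (empty_subset s) (by simp) h
      exact ⟨u, .inl hus, hu⟩
    · obtain ⟨u, hsu, -, hu⟩ :=
        exists_subsuperset_card_eq (subset_univ s) h (by simpa using ht)
      exact ⟨u, .inr hsu, hu⟩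
  refine ⟨fun i => if i ∈ u then 1 else 0, by rw [wt_ite_mem, hu], ?_⟩
  have hsupp : ({i | (if i ∈ u then (1 : Fin 2) else 0) ≠ 0} : Finset (Fin m)) = u := by
    ext i; by_cases i ∈ u <;> simp_all
  rw [hammingDist_eq_card_symmDiff, hsupp, ← hu]
  change #(s ∆ u) = Nat.dist #s #u
  rcases hsu with h | h
  · rw [symmDiff_of_ge h, card_sdiff_of_subset h, Nat.dist_eq_sub_of_le_right (card_le_card h)]
  · rw [symmDiff_of_le h, card_sdiff_of_subset h, Nat.dist_eq_sub_of_le (card_le_card h)]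

theorem exists_wt_eq {t : ℕ} (ht : t ≤ m) : ∃ α : Fin m → Fin 2, wt α = t :=
  (exists_wt_eq_hammingDist_eq 0 ht).imp fun _ => And.left

theorem distC_setOf_wt_mem {W : Set ℕ} {γ : Fin m → Fin 2} {d : ℕ}
    (hle : ∀ w ∈ W, d ≤ Nat.dist (wt γ) w)
    (hex : ∃ w ∈ W, w ≤ m ∧ Nat.dist (wt γ) w = d) :
    distC γ {β | wt β ∈ W} = d := by
  refine distC_eq_of_forall_le (fun β hβ => (hle _ hβ).trans (dist_wt_le_hammingDist γ β)) ?_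
  obtain ⟨w, hw, hwm, rfl⟩ := hex
  obtain ⟨β, hβ, hd⟩ := exists_wt_eq_hammingDist_eq γ hwm
  exact ⟨β, show wt β ∈ W from hβ ▸ hw, hd⟩

end BinaryWeight

section BinaryOrbits

variable {m : ℕ}

theorem perm_fin_two_eq_one_or_eq_swap : ∀ g : Perm (Fin 2), g = 1 ∨ g = swap 0 1 := by decide

theorem exists_perm_cnt_eq_iff (α β : Fin m → Fin 2) :
    (∃ g : Perm (Fin 2), ∀ a, cnt β (g a) = cnt α a) ↔
      wt β = wt α ∨ wt β = m - wt α := by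
  have hα := cnt_zero_add_wt α
  have hβ := cnt_zero_add_wt β
  simp only [wt_eq_cnt_one] at hα hβ ⊢
  constructor
  · rintro ⟨g, hg⟩
    have h₀ := hg 0
    have h₁ := hg 1
    rcases perm_fin_two_eq_one_or_eq_swap g with rfl | rfl
    · exact .inl h₁
    · simp only [swap_apply_left, swap_apply_right] at h₀ h₁
      omega
  · rintro (h | h)
    · exact ⟨1, Fin.forall_fin_two.2 ⟨by simp; omega, h⟩⟩
    · exact ⟨swap 0 1, Fin.forall_fin_two.2 ⟨by simp; omega, by simp; omega⟩⟩

theorem isOrbitOf_diagL_setOf_wt {a : ℕ} (ha : a ≤ m) :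
    IsOrbitOf (diagL (Fin m) 2) {γ | wt γ = a ∨ wt γ = m - a} := by
  obtain ⟨v, hv⟩ := exists_wt_eq ha
  refine ⟨v, Set.ext fun β => ?_⟩
  rw [Set.mem_ofPred_eq, Set.mem_ofPred_eq, exists_mem_diagL_apply_eq_iff,
    exists_perm_cnt_eq_iff, hv]

theorem complTransitive_diagL_of_forall_cell_eq {C : Set (Fin m → Fin 2)}
    (h : ∀ i ≤ covRad C, ∃ a ≤ m, cell C i = {γ | wt γ = a ∨ wt γ = m - a}) :
    ComplTransitive (diagL (Fin m) 2) C := by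
  refine ⟨diagL_le_autH, fun i hi => ?_⟩
  obtain ⟨a, ha, hcell⟩ := h i hi
  exact hcell ▸ isOrbitOf_diagL_setOf_wt ha

end BinaryOrbits

section RepetitionAndWCode

variable {m k : ℕ}

theorem repCode_eq_setOf_wt_mem : repCode (Fin m) 2 = {α | wt α ∈ ({0, m} : Set ℕ)} := by
  ext α
  simp only [repCode, Set.mem_ofPred_eq, Set.mem_insert_iff, Set.mem_singleton_iff,
    wt_eq_zero_iff, wt_eq_card_iff, Fin.exists_fin_two]

theorem distC_repCode (γ : Fin m → Fin 2) :
    distC γ (repCode (Fin m) 2) = min (wt γ) (m - wt γ) := by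
  have := wt_le γ
  rw [repCode_eq_setOf_wt_mem]
  apply distC_setOf_wt_mem
  · simp only [Set.mem_insert_iff, Set.mem_singleton_iff, forall_eq_or_imp, forall_eq]
    unfold Nat.dist
    omega
  · rcases le_total (wt γ) (m - wt γ) with h | h
    · exact ⟨0, .inl rfl, by simp [Nat.dist]; omega⟩
    · exact ⟨m, .inr rfl, le_rfl, by simp [Nat.dist]; omega⟩

theorem covRad_repCode (hk : m = 2 * k + 1) : covRad (repCode (Fin m) 2) = k := by
  refine covRad_eq_of_forall_le (fun γ => ?_) ?_
  · have := wt_le γ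
    rw [distC_repCode]
    omega
  · obtain ⟨γ, hγ⟩ := exists_wt_eq (m := m) (t := k) (by omega)
    exact ⟨γ, by rw [distC_repCode, hγ]; omega⟩

theorem cell_repCode (hk : m = 2 * k + 1) {i : ℕ} (hi : i ≤ k) :
    cell (repCode (Fin m) 2) i = {γ | wt γ = i ∨ wt γ = m - i} := by
  ext γ
  have := wt_le γ
  simp only [cell, Set.mem_ofPred_eq, distC_repCode]
  omega

theorem wCode_eq_setOf_wt_mem (hk : m = 2 * k + 1) :
    wCode m = {α | wt α ∈ ({k, k + 1} : Set ℕ)} := by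
  ext α
  simp only [wCode, Set.mem_ofPred_eq, Set.mem_insert_iff, Set.mem_singleton_iff]
  omega

theorem distC_wCode (hk : m = 2 * k + 1) (γ : Fin m → Fin 2) :
    distC γ (wCode m) = if wt γ ≤ k then k - wt γ else wt γ - (k + 1) := by
  rw [wCode_eq_setOf_wt_mem hk]
  apply distC_setOf_wt_mem
  · simp only [Set.mem_insert_iff, Set.mem_singleton_iff, forall_eq_or_imp, forall_eq]
    unfold Nat.dist
    split <;> omega
  · split
    · exact ⟨k, .inl rfl, by omega, by unfold Nat.dist; omega⟩
    · exact ⟨k + 1, .inr rfl, by omega, by unfold Nat.dist; omega⟩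

theorem covRad_wCode (hk : m = 2 * k + 1) : covRad (wCode m) = k := by
  refine covRad_eq_of_forall_le (fun γ => ?_) ⟨0, ?_⟩
  · have := wt_le γ
    rw [distC_wCode hk]
    split <;> omega
  · rw [distC_wCode hk, (wt_eq_zero_iff 0).2 rfl]
    simp

theorem cell_wCode (hk : m = 2 * k + 1) {i : ℕ} (hi : i ≤ k) :
    cell (wCode m) i = {γ | wt γ = k - i ∨ wt γ = m - (k - i)} := by
  ext γ
  have := wt_le γ
  simp only [cell, Set.mem_ofPred_eq, distC_wCode hk]
  split <;> omega

theorem cell_wCode_self (hk : m = 2 * k + 1) : cell (wCode m) k = repCode (Fin m) 2 := by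
  rw [cell_wCode hk le_rfl, repCode_eq_setOf_wt_mem]
  ext γ
  simp only [Set.mem_ofPred_eq, Set.mem_insert_iff, Set.mem_singleton_iff, Nat.sub_self,
    Nat.sub_zero]

end RepetitionAndWCode

theorem wCode_covering_radius_general (m : ℕ) (hodd : Odd m) :
    covRad (wCode m) = (m - 1) / 2 ∧
    cell (wCode m) ((m - 1) / 2) = repCode (Fin m) 2 ∧
    (∃ X : Subgroup (Equiv.Perm (Fin m → Fin 2)), ComplTransitive X (wCode m)) ∧
    (∃ X : Subgroup (Equiv.Perm (Fin m → Fin 2)),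
      ComplTransitive X (cell (wCode m) ((m - 1) / 2))) := by
  obtain ⟨k, hk⟩ := hodd
  rw [show (m - 1) / 2 = k by omega, cell_wCode_self hk]
  refine ⟨covRad_wCode hk, rfl, ⟨diagL (Fin m) 2, ?_⟩, ⟨diagL (Fin m) 2, ?_⟩⟩
  · refine complTransitive_diagL_of_forall_cell_eq fun i hi => ?_
    rw [covRad_wCode hk] at hi
    exact ⟨k - i, by omega, cell_wCode hk hi⟩
  · refine complTransitive_diagL_of_forall_cell_eq fun i hi => ?_
    rw [covRad_repCode hk] at hi
    exact ⟨i, by omega, cell_repCode hk hi⟩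

/-- Corollary 3.4(i): for odd `m ≥ 3`, the code `C = W([m/2],2)` has
covering radius `ρ = (m-1)/2`, its cell `C_ρ` equals the binary repetition code, and both
`C` and `C_ρ` are completely transitive. -/
theorem wCode_covering_radius (m : ℕ) (hm : 3 ≤ m) (hodd : Odd m) :
    covRad (wCode m) = (m - 1) / 2 ∧
    cell (wCode m) ((m - 1) / 2) = repCode (Fin m) 2 ∧
    (∃ X : Subgroup (Equiv.Perm (Fin m → Fin 2)), ComplTransitive X (wCode m)) ∧
    (∃ X : Subgroup (Equiv.Perm (Fin m → Fin 2)),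
      ComplTransitive X (cell (wCode m) ((m - 1) / 2))) :=
  wCode_covering_radius_general m hodd
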